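/- arXiv:1104.2991 — 4 statements merged into one kernel-verified Lean document; each statement's English description precedes it below -/
import Mathlib

section
/- Let x, y, h be an sl(2) triple acting on a module and let K(z) = Σₖ αₖ z^k with α₀ = 1 and k(k-h₀+1)αₖ + α_{k-1} = 0 (h₀ ∉ ℤ_{≥2}). Then for any f₁ with h f₁ = (h₀-2) f₁, the normal-ordered operator satisfies :K(z): (x f₁) = 0 as a formal series; i.e., the formal solution operator annihilates terms of the form x·f₁. -/
/-!
In the algebra, `[y^(n+1), x] = -(n+1) y^n (h - n)`, so on a vector `v` with `h v = μ v` one has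
`y^(n+1) x v = x y^(n+1) v - (n+1)(μ - n) y^n v`. With `μ = h₀ - 2` the recursion for `α` says exactly
that `(n+1)(μ - n) α_(n+1) = α_n`, so the partial sums of `Σ αₖ x^k y^k (x v)` telescope to
`x^(N+1) (α_N y^N v)`.
-/

open Finset

section Sl2Relations

variable {A : Type*} [Ring A] {x y h : A}

theorem h_mul_y_pow (hy : h * y - y * h = -(2 * y)) (n : ℕ) :
    h * y ^ n = y ^ n * h - (2 * n) • y ^ n := by
  have hy' : h * y = y * h - 2 • y := by
    rw [← sub_add_cancel (h * y) (y * h), hy, two_nsmul, two_mul]; abel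
  induction n with
  | zero => simp
  | succ n ih =>
    rw [pow_succ, ← mul_assoc, ih, sub_mul, mul_assoc, hy', mul_sub, ← mul_assoc, smul_mul_assoc,
      mul_smul_comm, ← pow_succ]
    module

theorem y_pow_succ_mul_x (hy : h * y - y * h = -(2 * y)) (hxy : x * y - y * x = h) (n : ℕ) :
    y ^ (n + 1) * x = x * y ^ (n + 1) - (n + 1) • (y ^ n * h - n • y ^ n) := by
  have hyx : y * x = x * y - h := by rw [← hxy]; abel
  induction n with
  | zero => simp [hyx]
  | succ n ih =>
    rw [pow_succ', mul_assoc, ih, mul_sub, ← mul_assoc, hyx, sub_mul, mul_assoc, h_mul_y_pow hy,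
      ← pow_succ', smul_sub, smul_sub, mul_sub, mul_smul_comm, mul_smul_comm, ← mul_assoc,
      ← pow_succ', mul_smul_comm, ← pow_succ']
    module

variable {R V : Type*} [CommRing R] [Algebra R A] [AddCommGroup V] [Module A V] [Module R V]
  [IsScalarTower R A V] {μ : R} {v : V}

theorem y_pow_succ_smul_x_smul (hy : h * y - y * h = -(2 * y)) (hxy : x * y - y * x = h)
    (hv : h • v = μ • v) (n : ℕ) :
    y ^ (n + 1) • x • v = x • y ^ (n + 1) • v - ((n + 1) * (μ - n)) • y ^ n • v := by
  rw [← mul_smul, y_pow_succ_mul_x hy hxy, sub_smul, mul_smul]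
  congr 1
  rw [smul_assoc, sub_smul, mul_smul, hv, smul_assoc, smul_algebra_smul_comm]
  simp only [← Nat.cast_smul_eq_nsmul R]
  generalize y ^ n • v = w
  module

theorem sum_x_pow_smul_y_pow_smul_x_smul (hy : h * y - y * h = -(2 * y))
    (hxy : x * y - y * x = h) (hv : h • v = μ • v) (α : ℕ → R)
    (hα : ∀ k : ℕ, ((k + 1) * (μ - k)) * α (k + 1) = α k) (N : ℕ) :
    ∑ k ∈ range (N + 1), α k • x ^ k • y ^ k • x • v = x ^ (N + 1) • α N • y ^ N • v := by
  induction N with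
  | zero => simp [smul_comm x]
  | succ N ih =>
    rw [sum_range_succ, ih, y_pow_succ_smul_x_smul hy hxy hv, smul_sub, smul_sub, ← mul_smul,
      ← pow_succ, ← hα N]
    simp only [smul_algebra_smul_comm _ (x ^ _)]
    generalize x ^ (N + 1) • y ^ N • v = a
    generalize x ^ (N + 1 + 1) • y ^ (N + 1) • v = b
    module

end Sl2Relations

theorem solution_operator_kills_x_terms_general {A V : Type*} [Ring A] [Algebra ℂ A]
    [AddCommGroup V] [Module A V] [Module ℂ V] [IsScalarTower ℂ A V]
    (x y h : A)
    (hy : h * y - y * h = -(2 * y))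
    (hxy : x * y - y * x = h)
    (h₀ : ℂ)
    (α : ℕ → ℂ)
    (hrec : ∀ k : ℕ, 1 ≤ k → (k : ℂ) * ((k : ℂ) + 1 - h₀) * α k + α (k - 1) = 0)
    (f₁ : V) (hf₁ : h • f₁ = (h₀ - 2) • f₁) :
    ∀ N : ℕ, ∃ g : V,
      ∑ k ∈ Finset.range (N + 1), α k • (x ^ k • (y ^ k • (x • f₁)))
        = x ^ (N + 1) • g := by
  have hα : ∀ k : ℕ, ((k + 1) * (h₀ - 2 - k)) * α (k + 1) = α k := fun k => by
    have := hrec (k + 1) (by omega)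
    push_cast at this
    linear_combination -this
  exact fun N => ⟨_, sum_x_pow_smul_y_pow_smul_x_smul hy hxy hf₁ α hα N⟩

/-- Let `K(z) = Σ αₖ z^k` with `α₀ = 1` and `k(k-h₀+1)αₖ + α_{k-1} = 0` (`h₀ ∉ ℤ_{≥2}`).
For any `f₁` with `h f₁ = (h₀-2) f₁`, the normal-ordered operator `:K(z): = Σ αₖ x^k y^k`
annihilates `x·f₁` as a formal series: every partial sum vanishes to all orders in `x`,
i.e. lies in `x^(N+1)·V`. -/
theorem solution_operator_kills_x_terms {A V : Type*} [Ring A] [Algebra ℂ A]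
    [AddCommGroup V] [Module A V] [Module ℂ V] [IsScalarTower ℂ A V]
    (x y h : A)
    (hx : h * x - x * h = 2 * x)
    (hy : h * y - y * h = -(2 * y))
    (hxy : x * y - y * x = h)
    (h₀ : ℂ) (hh₀ : ∀ m : ℕ, 2 ≤ m → h₀ ≠ (m : ℂ))
    (α : ℕ → ℂ) (hα0 : α 0 = 1)
    (hrec : ∀ k : ℕ, 1 ≤ k → (k : ℂ) * ((k : ℂ) + 1 - h₀) * α k + α (k - 1) = 0)
    (f₁ : V) (hf₁ : h • f₁ = (h₀ - 2) • f₁) :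
    ∀ N : ℕ, ∃ g : V,
      ∑ k ∈ Finset.range (N + 1), α k • (x ^ k • (y ^ k • (x • f₁)))
        = x ^ (N + 1) • g :=
  solution_operator_kills_x_terms_general x y h hy hxy h₀ α hrec f₁ hf₁
end

section
/- If a formal series Σ_{i≥0} fᵢ with fᵢ in the (w₀ - α - i)-weight spaces, multiplied by x^α, is annihilated by y where x, y, h satisfy the extended relation [x^α, y] = α x^(α-1)(h + α - 1), and f₀ ≠ 0 along the leading order, then necessarily α = 0 or α = h₀ - 1, where h₀ = d + 2w₀ is the h-eigenvalue of x^α f₀. -/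
/-! Commuting `y` past `x^α` with `[x^α, y] = α x^(α-1)(h + α - 1)` and letting `h` act on the
weight vector `f₀` gives `y·(x^α f₀) = x^α (y f₀) - α(h₀ - α - 1) x^(α-1) f₀`. If `y` kills the
series, the last term lies in `x^α·V`, so by the genericity of `f₀` its coefficient, the indicial
polynomial `α(h₀ - α - 1)`, vanishes. -/

def indicialCoeff {R : Type*} [CommRing R] (α h₀ : R) : R := α * (h₀ - α - 1)

theorem indicialCoeff_eq_zero_iff {R : Type*} [CommRing R] [NoZeroDivisors R] {α h₀ : R} : indicialCoeff α h₀ = 0 ↔ α = 0 ∨ α = h₀ - 1 := by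
  rw [indicialCoeff, mul_eq_zero, sub_sub, sub_eq_zero, eq_comm (a := h₀), ← eq_sub_iff_add_eq]

section

variable {R A V : Type*} [CommSemiring R] [Semiring A] [Algebra R A]
  [AddCommMonoid V] [Module A V] [Module R V] [IsScalarTower R A V]

theorem mul_add_smul_one_smul_of_smul_eq {h : A} {f : V} {μ : R} (hf : h • f = μ • f)
    (a : A) (c : R) : (a * (h + c • (1 : A))) • f = (μ + c) • (a • f) := by
  rw [mul_smul, add_smul, hf, smul_assoc, one_smul, ← add_smul, smul_comm]

end

theorem smul_xp_smul_eq_sub_indicialCoeff_smul {R A V : Type*} [CommRing R] [Ring A]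
    [Algebra R A] [AddCommGroup V] [Module A V] [Module R V] [IsScalarTower R A V]
    {y h : A} {xp : R → A} {α h₀ : R}
    (hrel : ∀ β : R, y * xp β = xp β * y - β • (xp (β - 1) * (h + (β - 1) • (1 : A))))
    {f₀ : V} (hwt : h • f₀ = (h₀ - 2 * α) • f₀) :
    y • (xp α • f₀) = xp α • (y • f₀) - indicialCoeff α h₀ • (xp (α - 1) • f₀) := by
  rw [← mul_smul, hrel α, sub_smul, mul_smul (xp α) y, smul_assoc,
    mul_add_smul_one_smul_of_smul_eq hwt, indicialCoeff, ← smul_smul,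
    show h₀ - 2 * α + (α - 1) = h₀ - α - 1 by ring]

/-- Suppose `y` and the formal powers `x^β` (written `xp β`) satisfy the extended
commutation relation `[x^β, y] = β x^(β-1)(h + β - 1)`, `f₀` has `h`-eigenvalue
`h₀ - 2α` (so `x^α f₀` has eigenvalue `h₀`), the series `x^α f₀ + ⋯` is annihilated
by `y` at leading order (i.e. `y·(x^α·f₀)` lies in `x^α·V`), and `f₀` is nonzero at
leading order (no nonzero multiple of `x^(α-1)·f₀` lies in `x^α·V`). Then
necessarily `α = 0` or `α = h₀ - 1`. -/
theorem indicial_roots {A V : Type*} [Ring A] [Algebra ℂ A]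
    [AddCommGroup V] [Module A V] [Module ℂ V] [IsScalarTower ℂ A V]
    (y h : A) (xp : ℂ → A) (α h₀ : ℂ)
    (hrel : ∀ β : ℂ, y * xp β = xp β * y - β • (xp (β - 1) * (h + (β - 1) • (1 : A))))
    (f₀ : V) (hwt : h • f₀ = (h₀ - 2 * α) • f₀)
    (hann : ∃ w : V, y • (xp α • f₀) = xp α • w)
    (hgen : ∀ c : ℂ, (∃ w : V, c • (xp (α - 1) • f₀) = xp α • w) → c = 0) :
    α = 0 ∨ α = h₀ - 1 := by
  obtain ⟨w, hw⟩ := hann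
  rw [smul_xp_smul_eq_sub_indicialCoeff_smul hrel hwt] at hw
  refine indicialCoeff_eq_zero_iff.mp (hgen _ ⟨y • f₀ - w, ?_⟩)
  rw [smul_sub, ← hw, sub_sub_cancel]
end

section
/- Let x, y, h be an sl(2) triple acting on a module with a central-like element t (playing the role of log τ) satisfying [h,t] = 2 and [x,t] = 0. Then for h₀ ∈ ℤ_{≥1} and any f₁ with h·f₁ = (h₀-2)·f₁, the Weyl-ordered operator W = (t·y^{h₀-1} + y^{h₀-1}·t)/2 satisfies [W, x]·f₁ = (1-h₀)·y^{h₀-2}·f₁. -/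
/-!
Write `Y = y ^ (h₀ - 1)`. Since `t` commutes with `x`, `[t Y + Y t, x] = t [Y, x] + [Y, x] t`,
and the sl(2) relations give `[y ^ n, x] = -n y ^ (n - 1) (h - (n - 1))`. The last factor
`h - (h₀ - 2)` kills `f₁`, so only `[Y, x] t f₁` survives, and there `[h, t] = 2` turns
`(h - (h₀ - 2)) t f₁` into `2 f₁`.
-/

section Sl2Pow

variable {A : Type*} [Ring A] {x y h : A}

theorem mul_pow_succ_sub_pow_succ_mul (hy : h * y - y * h = -(2 * y)) (hxy : x * y - y * x = h)
    (n : ℕ) : x * y ^ (n + 1) - y ^ (n + 1) * x = (n + 1) * y ^ n * (h - n) := by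
  induction n with
  | zero => simpa using hxy
  | succ n ih =>
    have hy' : (h - n) * y = y * (h - n - 2) := by
      calc (h - n) * y = (h * y - y * h) + y * h - n * y := by noncomm_ring
        _ = _ := by rw [hy, (Nat.cast_commute n y).eq]; noncomm_ring
    calc x * y ^ (n + 2) - y ^ (n + 2) * x
        = (x * y ^ (n + 1) - y ^ (n + 1) * x) * y + y ^ (n + 1) * (x * y - y * x) := by
          noncomm_ring
      _ = (n + 1) * y ^ (n + 1) * (h - n - 2) + y ^ (n + 1) * h := by
          rw [ih, hxy, mul_assoc _ (h - n), hy', pow_succ]; noncomm_ring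
      _ = _ := by
        have hn := (Nat.cast_commute n (y ^ (n + 1))).eq
        generalize y ^ (n + 1) = Y at hn ⊢
        push_cast
        simp only [mul_sub, sub_add_eq_sub_sub, mul_assoc, ← hn]
        noncomm_ring

theorem pow_mul_sub_mul_pow (hy : h * y - y * h = -(2 * y)) (hxy : x * y - y * x = h) (n : ℕ) :
    y ^ n * x - x * y ^ n = -(n * y ^ (n - 1) * (h - (n - 1))) := by
  cases n with
  | zero => simp
  | succ n =>
    rw [← neg_sub, mul_pow_succ_sub_pow_succ_mul hy hxy]
    push_cast
    rw [add_sub_cancel_right]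

end Sl2Pow

theorem commutator_anticommutator_of_commute {A : Type*} [Ring A] {x t : A} (hxt : Commute x t)
    (Y : A) :
    (t * Y + Y * t) * x - x * (t * Y + Y * t) = t * (Y * x - x * Y) + (Y * x - x * Y) * t := by
  calc _ = t * (Y * x) - (x * t) * Y + Y * (t * x) - x * Y * t := by noncomm_ring
    _ = t * (Y * x) - (t * x) * Y + Y * (x * t) - x * Y * t := by rw [hxt.eq]
    _ = _ := by noncomm_ring

theorem commutator_anticommutator_pow_smul_of_weight {A V : Type*} [Ring A] [AddCommGroup V]
    [Module A V] {x y h t : A} (hy : h * y - y * h = -(2 * y)) (hxy : x * y - y * x = h)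
    (hht : h * t - t * h = 2) (hxt : Commute x t) (n : ℕ) {v : V}
    (hv : h • v = ((n : A) - 1) • v) :
    ((t * y ^ n + y ^ n * t) * x - x * (t * y ^ n + y ^ n * t)) • v
      = -((2 * n) • y ^ (n - 1) • v) := by
  obtain ⟨g, hg_def⟩ : ∃ g : A, h - ((n : A) - 1) = g := ⟨_, rfl⟩
  have hg : g • v = 0 := by rw [← hg_def, sub_smul, hv, sub_self]
  have hgt : g • t • v = (2 : A) • v := by
    have hgt' : g * t = t * g + 2 := by
      calc g * t = (h * t - t * h) + t * g - (n * t - t * n) := by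
            rw [← hg_def]; noncomm_ring
        _ = _ := by rw [hht, (Nat.cast_commute n t).eq, sub_self, sub_zero, add_comm]
    rw [← mul_smul, hgt', add_smul, mul_smul, hg, smul_zero, zero_add]
  rw [commutator_anticommutator_of_commute hxt, pow_mul_sub_mul_pow hy hxy, hg_def]
  simp only [mul_neg, neg_mul, add_smul, neg_smul, mul_smul, hg, hgt, smul_zero, neg_zero,
    zero_add, Nat.cast_smul_eq_nsmul, ofNat_smul_eq_nsmul, smul_comm (y ^ (n - 1)) (2 : ℕ)]
  rw [smul_comm n 2]

theorem weyl_ordered_commutator_general {A V : Type*} [Ring A] [Algebra ℂ A]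
    [AddCommGroup V] [Module A V] [Module ℂ V] [IsScalarTower ℂ A V]
    (x y h t : A)
    (hy : h * y - y * h = -(2 * y))
    (hxy : x * y - y * x = h)
    (hht : h * t - t * h = 2)
    (hxt : x * t - t * x = 0)
    (h₀ : ℕ) (hh₀ : 1 ≤ h₀) (f₁ : V)
    (hf₁ : h • f₁ = ((h₀ : ℂ) - 2) • f₁) :
    ((((1 : ℂ) / 2) • (t * y ^ (h₀ - 1) + y ^ (h₀ - 1) * t)) * x
        - x * (((1 : ℂ) / 2) • (t * y ^ (h₀ - 1) + y ^ (h₀ - 1) * t))) • f₁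
      = ((1 : ℂ) - (h₀ : ℂ)) • (y ^ (h₀ - 2) • f₁) := by
  obtain ⟨n, rfl⟩ : ∃ n, h₀ = n + 1 := ⟨h₀ - 1, by omega⟩
  have hv : h • f₁ = ((n : A) - 1) • f₁ := by
    rw [hf₁, show (n : A) - 1 = algebraMap ℂ A ((n : ℂ) - 1) by simp, algebraMap_smul]
    congr 1
    push_cast
    ring
  rw [smul_mul_assoc, mul_smul_comm, ← smul_sub, smul_assoc, Nat.add_sub_cancel,
    commutator_anticommutator_pow_smul_of_weight hy hxy hht (sub_eq_zero.mp hxt) n hv,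
    show n + 1 - 2 = n - 1 by omega, ← Nat.cast_smul_eq_nsmul ℂ]
  rw [smul_neg, smul_smul, ← neg_smul]
  congr 1
  push_cast
  ring

/-- Let `x, y, h` be an sl(2) triple and `t` (playing the role of `log τ`) satisfy
`[h,t] = 2` and `[x,t] = 0`. Then for `h₀ ∈ ℤ_{≥1}` and any `f₁` with
`h·f₁ = (h₀-2)·f₁`, the Weyl-ordered operator `W = (t·y^(h₀-1) + y^(h₀-1)·t)/2`
satisfies `[W, x]·f₁ = (1-h₀)·y^(h₀-2)·f₁`. -/
theorem weyl_ordered_commutator {A V : Type*} [Ring A] [Algebra ℂ A]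
    [AddCommGroup V] [Module A V] [Module ℂ V] [IsScalarTower ℂ A V]
    (x y h t : A)
    (hx : h * x - x * h = 2 * x)
    (hy : h * y - y * h = -(2 * y))
    (hxy : x * y - y * x = h)
    (hht : h * t - t * h = 2)
    (hxt : x * t - t * x = 0)
    (h₀ : ℕ) (hh₀ : 1 ≤ h₀) (f₁ : V)
    (hf₁ : h • f₁ = ((h₀ : ℂ) - 2) • f₁) :
    ((((1 : ℂ) / 2) • (t * y ^ (h₀ - 1) + y ^ (h₀ - 1) * t)) * x
        - x * (((1 : ℂ) / 2) • (t * y ^ (h₀ - 1) + y ^ (h₀ - 1) * t))) • f₁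
      = ((1 : ℂ) - (h₀ : ℂ)) • (y ^ (h₀ - 2) • f₁) :=
  weyl_ordered_commutator_general x y h t hy hxy hht hxt h₀ hh₀ f₁ hf₁
end

section
/- Let x, y, h be an sl(2) triple acting on a module. For any formal power series K(z) ∈ ℂ[[z]] with normal ordering :z^k: = x^k y^k, the operator identity y·:K(z): = :(zK'' + 2K' + K): · y - :K': · y·h holds on arbitrary module elements (no eigenvalue assumption). -/
/-!
Commuting `y` through `x ^ (k + 1)` gives `y x^(k+1) = x^(k+1) y - (k+1) x^k (h + k)`, and pushing
`h` through `y ^ (k + 1)` gives `h y^(k+1) = y^(k+1) (h - 2(k+1))`. Together they yield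
`y · :z^(k+1): = :z^(k+1): y + (k+1)(k+2) :z^k: y - (k+1) :z^k: y h`, which is the identity
coefficient by coefficient; the index shift costs nothing because `α (N + 1) = 0`.
-/

namespace Sl2Triple

variable {A : Type*} [Ring A] {x y h : A}

theorem y_mul_x_pow_succ (hx : h * x - x * h = 2 * x) (hxy : x * y - y * x = h) (k : ℕ) :
    y * x ^ (k + 1) = x ^ (k + 1) * y - (k + 1) • (x ^ k * h + k • x ^ k) := by
  have hyx : y * x = x * y - h := by rw [← hxy]; abel
  have hhx : h * x = x * h + 2 * x := by rw [← hx]; abel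
  induction k with
  | zero => simp [hyx]
  | succ k ih =>
    rw [pow_succ, ← mul_assoc, ih]
    simp only [sub_mul, add_mul, smul_mul_assoc, mul_assoc, hyx, hhx, pow_succ, mul_sub, mul_add,
      two_mul]
    module

theorem h_mul_y_pow (hy : h * y - y * h = -(2 * y)) (k : ℕ) :
    h * y ^ k = y ^ k * h - (2 * k) • y ^ k := by
  have hhy : h * y = y * h - 2 * y := by rw [sub_eq_add_neg, ← hy]; abel
  induction k with
  | zero => simp
  | succ k ih =>
    rw [pow_succ, ← mul_assoc, ih]
    simp only [sub_mul, smul_mul_assoc, mul_assoc, hhy, mul_sub, mul_add, two_mul]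
    module

theorem y_mul_x_pow_mul_y_pow_succ (hx : h * x - x * h = 2 * x) (hy : h * y - y * h = -(2 * y))
    (hxy : x * y - y * x = h) (k : ℕ) :
    y * (x ^ (k + 1) * y ^ (k + 1)) = x ^ (k + 1) * y ^ (k + 1) * y
      + ((k + 1) * (k + 2)) • (x ^ k * y ^ k * y) - (k + 1) • (x ^ k * y ^ k * (y * h)) := by
  rw [← mul_assoc, y_mul_x_pow_succ hx hxy, sub_mul, smul_mul_assoc, add_mul, mul_assoc _ h,
    h_mul_y_pow hy, mul_assoc _ y, ← pow_succ']
  simp only [pow_succ, mul_sub, smul_mul_assoc, mul_smul_comm, mul_assoc]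
  module

end Sl2Triple

/-- For an sl(2) triple `x, y, h` and any (truncated) formal series
`K(z) = Σ αₖ z^k` with normal ordering `:z^k: = x^k y^k`, the operator identity
`y·:K(z): = :(zK'' + 2K' + K):·y - :K':·y·h` holds (no eigenvalue assumption),
order by order. -/
theorem normal_ordered_left_identity {A : Type*} [Ring A] [Algebra ℂ A]
    (x y h : A)
    (hx : h * x - x * h = 2 * x)
    (hy : h * y - y * h = -(2 * y))
    (hxy : x * y - y * x = h)
    (N : ℕ) (α : ℕ → ℂ) (htop : α (N + 1) = 0) :
    ∑ k ∈ Finset.range (N + 1), α k • (y * (x ^ k * y ^ k))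
      = ∑ k ∈ Finset.range (N + 1),
          ((((k : ℂ) + 1) * ((k : ℂ) + 2)) * α (k + 1) + α k) • (x ^ k * y ^ k * y)
        - ∑ k ∈ Finset.range (N + 1),
          (((k : ℂ) + 1) * α (k + 1)) • (x ^ k * y ^ k * (y * h)) := by
  have hterm (k : ℕ) : α (k + 1) • (y * (x ^ (k + 1) * y ^ (k + 1)))
      = α (k + 1) • (x ^ (k + 1) * y ^ (k + 1) * y)
        + ((((k : ℂ) + 1) * ((k : ℂ) + 2)) * α (k + 1)) • (x ^ k * y ^ k * y)
        - (((k : ℂ) + 1) * α (k + 1)) • (x ^ k * y ^ k * (y * h)) := by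
    rw [Sl2Triple.y_mul_x_pow_mul_y_pow_succ hx hy hxy]
    module
  rw [Finset.sum_range_succ']
  simp only [hterm, add_smul, Finset.sum_add_distrib, Finset.sum_sub_distrib]
  rw [Finset.sum_range_succ' (fun k => α k • (x ^ k * y ^ k * y)), Finset.sum_range_succ _ N,
    Finset.sum_range_succ _ N, htop]
  simp only [mul_zero, zero_smul, add_zero, pow_zero, one_mul, mul_one]
  abel
end
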